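/- arXiv:math/0209369 — 2 statements merged into one kernel-verified Lean document; each statement's English description precedes it below -/
import Mathlib

section
/- Let A → A' be a faithfully flat ring homomorphism of noetherian rings, U ⊆ Spec A an open subset with preimage U' ⊆ Spec A'. Then Γ(U', O_{Spec A'}) ≅ Γ(U, O_{Spec A}) ⊗_A A'. -/
/-!
The comparison map `A' ⊗[A] 𝒪(U) → 𝒪(U')`, `a' ⊗ s ↦ a' · s|_{U'}`, is an isomorphism for every
quasi-compact open `U` as soon as `A'` is flat over `A`, and in a noetherian ring every open is
quasi-compact. On a basic open `D(g)` both sides are the localization `A'_g`. A quasi-compact open is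
a finite union of basic opens, and one passes from `V`, `W` and `V ∩ W` to `V ∪ W` with the
Mayer–Vietoris sequence `0 → 𝒪(V ∪ W) → 𝒪(V) × 𝒪(W) → 𝒪(V ∩ W)`, which stays exact after
`A' ⊗[A] -` by flatness, and the five lemma.
-/

open AlgebraicGeometry PrimeSpectrum TopologicalSpace TensorProduct
open CategoryTheory (homOfLE)
open Opposite

universe u

namespace TopCat.Sheaf

variable {X : TopCat.{u}} (F : X.Sheaf CommRingCat.{u}) (U V : Opens X)

theorem injective_restrict_sup :
    Function.Injective fun s : F.1.obj (op (U ⊔ V)) =>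
      (F.1.map (homOfLE le_sup_left).op s, F.1.map (homOfLE le_sup_right).op s) :=
  fun s t h => F.eq_of_locally_eq₂ (homOfLE le_sup_left) (homOfLE le_sup_right) le_rfl s t
    (congrArg Prod.fst h) (congrArg Prod.snd h)

theorem exact_restrict_sup_restrict_sub :
    Function.Exact
      (fun s : F.1.obj (op (U ⊔ V)) =>
        (F.1.map (homOfLE le_sup_left).op s, F.1.map (homOfLE le_sup_right).op s))
      fun st : F.1.obj (op U) × F.1.obj (op V) =>
        F.1.map (homOfLE inf_le_left).op st.1 - F.1.map (homOfLE inf_le_right).op st.2 := by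
  rintro ⟨s, t⟩
  rw [sub_eq_zero]
  constructor
  · intro h
    exact ⟨(F.objSupIsoProdEqLocus U V).inv ⟨(s, t), h⟩,
      Prod.ext (F.objSupIsoProdEqLocus_inv_fst U V _) (F.objSupIsoProdEqLocus_inv_snd U V _)⟩
  · rintro ⟨u, hu⟩
    simp only [Prod.mk.injEq] at hu
    rw [← hu.1, ← hu.2, ← CommRingCat.comp_apply, ← CommRingCat.comp_apply, ← F.1.map_comp,
      ← F.1.map_comp]
    rfl

end TopCat.Sheaf

namespace PrimeSpectrum

theorem induction_on_isCompact {R : Type*} [CommRing R] {P : Opens (PrimeSpectrum R) → Prop}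
    (hbasic : ∀ f, P (basicOpen f)) (hsup : ∀ U V, P U → P V → P (U ⊓ V) → P (U ⊔ V))
    {U : Opens (PrimeSpectrum R)} (hU : IsCompact (U : Set (PrimeSpectrum R))) : P U := by
  classical
  obtain ⟨t, ht⟩ := isCompact_isOpen_iff.mp ⟨hU, U.2⟩
  obtain rfl : U = basicOpen 1 ⊓ t.sup basicOpen := by
    rw [basicOpen_one, top_inf_eq, Finset.sup_eq_iSup]
    ext p
    simp [← ht, Set.subset_def]
  clear ht hU
  -- With `1` generalized to `g`, the induction hypothesis also covers the intersection
  -- `D(ga) ∩ (D(g) ∩ ⋃ t) = D(ga) ∩ ⋃ t`.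
  generalize (1 : R) = g
  induction t using Finset.induction_on generalizing g with
  | empty => simpa using hbasic 0
  | insert a t _ ih =>
    rw [Finset.sup_insert, inf_sup_left, ← basicOpen_mul]
    refine hsup _ _ (hbasic _) (ih g) ?_
    rw [basicOpen_mul, inf_inf_inf_comm, inf_idem, ← inf_assoc, ← basicOpen_mul]
    exact ih _

end PrimeSpectrum

namespace AlgebraicGeometry.StructureSheaf

section Restriction

variable {R : Type u} [CommRing R]

variable (R) in
abbrev Sections (U : Opens (PrimeSpectrum R)) : Type u :=
  (Spec.structureSheaf R).obj.obj (op U)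

-- This is the `toOpen`-algebra structure of the main theorem. Mathlib's `openAlgebra` has a
-- different `smul` and is not found by instance search on `Sections R U`.
noncomputable instance (U : Opens (PrimeSpectrum R)) : Algebra R (Sections R U) :=
  (@algebraMap R _ _ _ (openAlgebra R (op U))).toAlgebra

instance (g : R) : IsLocalization.Away g (Sections R (basicOpen g)) :=
  ⟨(IsLocalization.to_basicOpen R g).1⟩

noncomputable def restrictₐ {U V : Opens (PrimeSpectrum R)} (h : V ≤ U) :
    Sections R U →ₐ[R] Sections R V where
  toRingHom := ((Spec.structureSheaf R).obj.map (homOfLE h).op).hom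
  commutes' _ := rfl

variable (U V : Opens (PrimeSpectrum R))

noncomputable def restrictSup : Sections R (U ⊔ V) →ₗ[R] Sections R U × Sections R V :=
  (restrictₐ le_sup_left).toLinearMap.prod (restrictₐ le_sup_right).toLinearMap

noncomputable def restrictSub : Sections R U × Sections R V →ₗ[R] Sections R (U ⊓ V) :=
  (restrictₐ inf_le_left).toLinearMap ∘ₗ LinearMap.fst R _ _ -
    (restrictₐ inf_le_right).toLinearMap ∘ₗ LinearMap.snd R _ _

theorem injective_restrictSup : Function.Injective (restrictSup U V) :=
  (Spec.structureSheaf R).injective_restrict_sup U V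

theorem exact_restrictSup_restrictSub : Function.Exact (restrictSup U V) (restrictSub U V) :=
  (Spec.structureSheaf R).exact_restrict_sup_restrict_sub U V

end Restriction

section BaseChange

variable {A A' : Type u} [CommRing A] [CommRing A'] [Algebra A A']

variable (A') in
abbrev preimage (U : Opens (PrimeSpectrum A)) : Opens (PrimeSpectrum A') :=
  Opens.comap ⟨PrimeSpectrum.comap (algebraMap A A'), PrimeSpectrum.continuous_comap _⟩ U

-- Only on preimages: on all `Sections A' V` this would, for `A' = A`, compete with the
-- `Algebra A (Sections A V)` instance above.
noncomputable instance (U : Opens (PrimeSpectrum A)) : Algebra A (Sections A' (preimage A' U)) :=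
  ((algebraMap A' _).comp (algebraMap A A')).toAlgebra

instance (U : Opens (PrimeSpectrum A)) : IsScalarTower A A' (Sections A' (preimage A' U)) :=
  .of_algebraMap_eq' rfl

variable (A') in
noncomputable def comapₐ (U : Opens (PrimeSpectrum A)) :
    Sections A U →ₐ[A] Sections A' (preimage A' U) where
  toRingHom := comap (algebraMap A A') U (preimage A' U) fun _ ↦ id
  commutes' := toOpen_comp_comap_apply (algebraMap A A') U

variable (A') in
noncomputable def baseChangeMap (U : Opens (PrimeSpectrum A)) :
    A' ⊗[A] Sections A U →ₐ[A'] Sections A' (preimage A' U) :=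
  Algebra.TensorProduct.productLeftAlgHom (Algebra.ofId A' _) (comapₐ A' U)

theorem baseChangeMap_tmul (U : Opens (PrimeSpectrum A)) (a' : A') (s : Sections A U) :
    baseChangeMap A' U (a' ⊗ₜ s) = algebraMap A' _ a' * comapₐ A' U s := rfl

theorem restrictₐ_baseChangeMap {U V : Opens (PrimeSpectrum A)} (h : V ≤ U)
    (x : A' ⊗[A] Sections A U) :
    restrictₐ (Opens.comap_mono _ h) (baseChangeMap A' U x) =
      baseChangeMap A' V ((restrictₐ h).toLinearMap.baseChange A' x) := by
  induction x with
  | zero => simp only [map_zero]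
  | add x y hx hy => simp only [map_add, hx, hy]
  | tmul a' s =>
    simp only [LinearMap.baseChange_tmul, baseChangeMap_tmul, map_mul, AlgHom.commutes]
    rfl

theorem bijective_baseChangeMap_basicOpen (g : A) :
    Function.Bijective (baseChangeMap A' (basicOpen g)) := by
  let : Algebra (Sections A (basicOpen g)) (Sections A' (preimage A' (basicOpen g))) :=
    (comapₐ A' (basicOpen g)).toAlgebra
  have : IsScalarTower A (Sections A (basicOpen g)) (Sections A' (preimage A' (basicOpen g))) :=
    .of_algebraMap_eq' (comapₐ A' (basicOpen g)).comp_algebraMap.symm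
  have : IsLocalization (Algebra.algebraMapSubmonoid A' (Submonoid.powers g))
      (Sections A' (preimage A' (basicOpen g))) := by
    rw [Algebra.algebraMapSubmonoid, Submonoid.map_powers]
    exact inferInstanceAs (IsLocalization.Away (algebraMap A A' g) (Sections A' (basicOpen _)))
  have := Algebra.isPushout_of_isLocalization (Submonoid.powers g) (Sections A (basicOpen g)) A'
    (Sections A' (preimage A' (basicOpen g)))
  have : baseChangeMap A' (basicOpen g) =
      (Algebra.IsPushout.equiv A A' (Sections A (basicOpen g))
        (Sections A' (preimage A' (basicOpen g)))).toAlgHom := by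
    ext s
    show baseChangeMap A' _ (1 ⊗ₜ s) = Algebra.IsPushout.equiv _ _ _ _ (1 ⊗ₜ s)
    rw [baseChangeMap_tmul, Algebra.IsPushout.equiv_tmul]
    rfl
  rw [this]
  exact AlgEquiv.bijective _

variable [Module.Flat A A']

theorem bijective_baseChangeMap_sup {U V : Opens (PrimeSpectrum A)}
    (hU : Function.Bijective (baseChangeMap A' U)) (hV : Function.Bijective (baseChangeMap A' V))
    (hUV : Function.Bijective (baseChangeMap A' (U ⊓ V))) :
    Function.Bijective (baseChangeMap A' (U ⊔ V)) := by
  let i₂ := ((baseChangeMap A' U).toLinearMap.prodMap (baseChangeMap A' V).toLinearMap) ∘ₗ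
    (TensorProduct.prodRight A A' A' (Sections A U) (Sections A V)).toLinearMap
  have hi₂ : Function.Bijective i₂ :=
    (hU.prodMap hV).comp (TensorProduct.prodRight A A' A' _ _).bijective
  refine LinearMap.bijective_of_bijective_of_injective_of_left_exact
    ((restrictSup U V).baseChange A') ((restrictSub U V).baseChange A')
    (restrictSup (preimage A' U) (preimage A' V)) (restrictSub (preimage A' U) (preimage A' V))
    (baseChangeMap A' (U ⊔ V)).toLinearMap i₂ (baseChangeMap A' (U ⊓ V)).toLinearMap
    ?_ ?_ ?_ (exact_restrictSup_restrictSub _ _) hi₂ hUV.1 ?_ (injective_restrictSup _ _)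
  · refine TensorProduct.AlgebraTensorModule.ext fun a' s ↦ Prod.ext ?_ ?_
    · exact restrictₐ_baseChangeMap le_sup_left (a' ⊗ₜ s)
    · exact restrictₐ_baseChangeMap le_sup_right (a' ⊗ₜ s)
  · refine LinearMap.ext fun x ↦ ?_
    induction x with
    | zero => simp only [map_zero]
    | add x y hx hy => simp only [map_add, LinearMap.comp_apply] at hx hy ⊢; rw [hx, hy]
    | tmul a' st =>
      change restrictₐ _ (baseChangeMap A' U (a' ⊗ₜ st.1)) -
          restrictₐ _ (baseChangeMap A' V (a' ⊗ₜ st.2)) =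
        baseChangeMap A' (U ⊓ V) (a' ⊗ₜ (restrictₐ inf_le_left st.1 - restrictₐ inf_le_right st.2))
      rw [restrictₐ_baseChangeMap, restrictₐ_baseChangeMap, TensorProduct.tmul_sub, map_sub]
      rfl
  · rw [LinearMap.baseChange_eq_ltensor, LinearMap.baseChange_eq_ltensor]
    exact Module.Flat.lTensor_exact A' (exact_restrictSup_restrictSub U V)
  · rw [LinearMap.baseChange_eq_ltensor]
    exact Module.Flat.lTensor_preserves_injective_linearMap _ (injective_restrictSup U V)

theorem bijective_baseChangeMap {U : Opens (PrimeSpectrum A)}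
    (hU : IsCompact (U : Set (PrimeSpectrum A))) : Function.Bijective (baseChangeMap A' U) :=
  induction_on_isCompact (P := fun U ↦ Function.Bijective (baseChangeMap A' U))
    bijective_baseChangeMap_basicOpen (fun _ _ ↦ bijective_baseChangeMap_sup) hU

end BaseChange

end AlgebraicGeometry.StructureSheaf

open AlgebraicGeometry.StructureSheaf in
theorem stmt2_general {A A' : Type} [CommRing A] [CommRing A']
    [IsNoetherianRing A]
    [Algebra A A'] [Module.FaithfullyFlat A A']
    (U : Opens (PrimeSpectrum A)) :
    letI U' : Opens (PrimeSpectrum A') :=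
      (Opens.comap ⟨PrimeSpectrum.comap (algebraMap A A'), PrimeSpectrum.continuous_comap (algebraMap A A')⟩) U
    letI B := (Spec.structureSheaf A).val.obj (Opposite.op U)
    letI B' := (Spec.structureSheaf A').val.obj (Opposite.op U')
    letI : Algebra A B := (StructureSheaf.toOpen A U).hom.toAlgebra
    letI : Algebra A' B' := (StructureSheaf.toOpen A' U').hom.toAlgebra
    Nonempty (B' ≃ₐ[A'] A' ⊗[A] B) :=
  ⟨(AlgEquiv.ofBijective (baseChangeMap A' U)
    (bijective_baseChangeMap (NoetherianSpace.isCompact _))).symm⟩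

/-- Let `A → A'` be a faithfully flat homomorphism of noetherian rings,
`U ⊆ Spec A` an open subset and `U' ⊆ Spec A'` its preimage. Then
`Γ(U', O_{Spec A'}) ≅ Γ(U, O_{Spec A}) ⊗_A A'` (as `A'`-algebras). -/
theorem stmt2 {A A' : Type} [CommRing A] [CommRing A']
    [IsNoetherianRing A] [IsNoetherianRing A']
    [Algebra A A'] [Module.FaithfullyFlat A A']
    (U : Opens (PrimeSpectrum A)) :
    letI U' : Opens (PrimeSpectrum A') :=
      (Opens.comap ⟨PrimeSpectrum.comap (algebraMap A A'), PrimeSpectrum.continuous_comap (algebraMap A A')⟩) U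
    letI B := (Spec.structureSheaf A).val.obj (Opposite.op U)
    letI B' := (Spec.structureSheaf A').val.obj (Opposite.op U')
    letI : Algebra A B := (StructureSheaf.toOpen A U).hom.toAlgebra
    letI : Algebra A' B' := (StructureSheaf.toOpen A' U').hom.toAlgebra
    Nonempty (B' ≃ₐ[A'] A' ⊗[A] B) :=
  stmt2_general U
end

section
/- Let R be a complete local noetherian ring of dimension one, h ∈ R an element with V(h) = V(m) (m the maximal ideal). Then 1/h ∈ R_h is not integral over R (equivalently, not integral over any subring of R_h generated over R by elements integral over R). -/
open Polynomial

/-- Let `R` be a one-dimensional complete local noetherian ring and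
`h ∈ R` with `V(h) = V(𝔪)`. Then `1/h ∈ R_h` is not integral over `R`; equivalently
(stated as the stronger form), `1/h` is not integral over any subring `T` of `R_h`
containing the image of `R` all of whose elements are integral over `R`. -/
theorem stmt15 {R : Type*} [CommRing R] [IsNoetherianRing R] [IsLocalRing R]
    [IsAdicComplete (IsLocalRing.maximalIdeal R) R]
    (hdim : ringKrullDim R = 1) (h : R)
    (hV : PrimeSpectrum.zeroLocus {h} =
      PrimeSpectrum.zeroLocus (IsLocalRing.maximalIdeal R : Set R)) :
    (¬ (algebraMap R (Localization.Away h)).IsIntegralElem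
        (IsLocalization.Away.invSelf h)) ∧
    ∀ T : Subring (Localization.Away h),
      (algebraMap R (Localization.Away h)).range ≤ T →
      (∀ t ∈ T, (algebraMap R (Localization.Away h)).IsIntegralElem t) →
      ¬ T.subtype.IsIntegralElem (IsLocalization.Away.invSelf h) := by
  -- `h` lies in the maximal ideal
  have hm : h ∈ IsLocalRing.maximalIdeal R := by
    have hmem : (⟨IsLocalRing.maximalIdeal R, inferInstance⟩ : PrimeSpectrum R) ∈
        PrimeSpectrum.zeroLocus (IsLocalRing.maximalIdeal R : Set R) := fun x hx => hx
    rw [← hV] at hmem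
    simpa using hmem (Set.mem_singleton h)
  have key : ¬ (algebraMap R (Localization.Away h)).IsIntegralElem
      (IsLocalization.Away.invSelf h) := by
    rintro ⟨p, pmon, hp⟩
    set f := algebraMap R (Localization.Away h) with hf
    letI : Invertible (f h) :=
      ⟨IsLocalization.Away.invSelf h,
        by rw [mul_comm]; exact IsLocalization.Away.mul_invSelf h,
        IsLocalization.Away.mul_invSelf h⟩
    have hinv : (⅟ (f h) : Localization.Away h) = IsLocalization.Away.invSelf h := rfl
    -- reverse the polynomial: `(reverse p).eval₂ f (f h) = 0`
    have h0 : (p.reverse).eval₂ f (f h) = 0 := by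
      have h2 := (Polynomial.eval₂_reverse_eq_zero_iff f (⅟ (f h)) p).mpr
        (by rw [hinv]; exact hp)
      rwa [invOf_invOf] at h2
    -- hence `f ((reverse p).eval h) = 0`
    have h1 : f ((p.reverse).eval h) = 0 := by
      rw [← Polynomial.eval₂_at_apply]; exact h0
    -- the element `(reverse p).eval h` has the form `h * v + 1`
    set u := (p.reverse).eval h with hu
    have hform : u = h * (p.reverse.divX.eval h) + 1 := by
      conv_lhs => rw [hu, ← Polynomial.X_mul_divX_add p.reverse]
      rw [Polynomial.eval_add, Polynomial.eval_mul, Polynomial.eval_X, Polynomial.eval_C,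
        Polynomial.coeff_zero_reverse, pmon.leadingCoeff]
    -- `u` is a unit
    have hunit : IsUnit u := by
      by_contra hnu
      have humem : u ∈ IsLocalRing.maximalIdeal R := hnu
      have : (1 : R) ∈ IsLocalRing.maximalIdeal R := by
        have := (IsLocalRing.maximalIdeal R).sub_mem humem
          (Ideal.mul_mem_right (p.reverse.divX.eval h) _ hm)
        rw [hform] at this
        simpa using this
      exact (IsLocalRing.maximalIdeal R).ne_top_iff_one.mp
        (Ideal.IsMaximal.ne_top inferInstance) this
    -- `f u = 0` gives `h ^ n * u = 0`, so `h ^ n = 0`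
    obtain ⟨⟨m, ⟨n, rfl⟩⟩, hmn⟩ := (IsLocalization.map_eq_zero_iff
      (Submonoid.powers h) (Localization.Away h) u).mp h1
    have hpow : h ^ n = 0 := by
      obtain ⟨w, hw⟩ := hunit
      have : h ^ n * u * ↑w⁻¹ = 0 := by rw [hmn, zero_mul]
      rwa [mul_assoc, ← hw, Units.mul_inv, mul_one] at this
    -- then every prime equals the maximal ideal, so `Spec R` is a subsingleton
    have hsub : ∀ q : PrimeSpectrum R, q.asIdeal = IsLocalRing.maximalIdeal R := by
      intro q
      have hhq : h ∈ q.asIdeal := q.2.mem_of_pow_mem n (hpow ▸ q.asIdeal.zero_mem)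
      have hq : q ∈ PrimeSpectrum.zeroLocus ({h} : Set R) := by
        simpa [PrimeSpectrum.mem_zeroLocus] using hhq
      rw [hV] at hq
      have hle : IsLocalRing.maximalIdeal R ≤ q.asIdeal := hq
      exact le_antisymm (IsLocalRing.le_maximalIdeal q.2.ne_top) hle
    have : Subsingleton (PrimeSpectrum R) :=
      ⟨fun a b => PrimeSpectrum.ext ((hsub a).trans (hsub b).symm)⟩
    have h0' : ringKrullDim R ≤ 0 := Order.krullDim_nonpos_of_subsingleton
    rw [hdim] at h0'
    exact absurd h0' (by norm_num)
  refine ⟨key, fun T hRT hTint hx => ?_⟩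
  -- transitivity of integrality
  apply key
  letI : Algebra R T := (((algebraMap R (Localization.Away h)).codRestrict T
    (fun r => hRT ⟨r, rfl⟩))).toAlgebra
  letI : Algebra T (Localization.Away h) := T.subtype.toAlgebra
  haveI : IsScalarTower R T (Localization.Away h) :=
    IsScalarTower.of_algebraMap_eq' rfl
  haveI : Algebra.IsIntegral R T := by
    constructor
    intro t
    obtain ⟨p, pmon, hpt⟩ := hTint t t.2
    refine ⟨p, pmon, ?_⟩
    have : T.subtype (Polynomial.eval₂ (algebraMap R T) t p) = 0 := by
      rw [Polynomial.hom_eval₂]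
      exact hpt
    exact Subtype.ext this
  have : IsIntegral R (IsLocalization.Away.invSelf h) :=
    isIntegral_trans (A := T) _ hx
  exact this
end
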